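/- arXiv:2305.04647 — 3 statements merged into one kernel-verified Lean document; each statement's English description precedes it below -/
import Mathlib

section
/- Let G_0, G_1 be 1 × n matrices (row vectors) over a finite field F_q such that every entry of G_0 and every entry of G_1 is nonzero. Then for every nonzero polynomial u(z) ∈ F_q[z], the polynomial codeword v(z) = u(z)·(G_0 + G_1 z) (a vector of n polynomials) has total Hamming weight at least 2n, where the weight of a vector of polynomials is the sum over all coefficients of the number of nonzero entries. -/
/-! Multiplying by a polynomial with nonzero constant term and positive degree keeps the lowest
exponent of `u` and raises the highest one, so each `u * (G0 j + G1 j z)` has at least two nonzero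
coefficients. -/

open Polynomial

namespace Polynomial

theorem two_le_card_support_of_natTrailingDegree_lt_natDegree {R : Type*} [Semiring R]
    {p : R[X]} (h : p.natTrailingDegree < p.natDegree) : 2 ≤ p.support.card := by
  have hp : p ≠ 0 := by rintro rfl; simp at h
  exact Finset.one_lt_card.mpr ⟨_, natTrailingDegree_mem_support_of_nonzero hp,
    _, natDegree_mem_support_of_nonzero hp, h.ne⟩

theorem two_le_card_support_mul {R : Type*} [CommRing R] [IsDomain R] {u q : R[X]}
    (hu : u ≠ 0) (hq0 : q.coeff 0 ≠ 0) (hq : 0 < q.natDegree) :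
    2 ≤ (u * q).support.card := by
  have hq_ne : q ≠ 0 := by rintro rfl; simp at hq0
  have htq : q.natTrailingDegree = 0 := natTrailingDegree_eq_zero_of_constantCoeff_ne_zero hq0
  apply two_le_card_support_of_natTrailingDegree_lt_natDegree
  rw [natTrailingDegree_mul hu hq_ne, natDegree_mul hu hq_ne, htq, add_zero]
  exact u.natTrailingDegree_le_natDegree.trans_lt (Nat.lt_add_of_pos_right hq)

end Polynomial

theorem stmt2_general {F : Type*} [Field F] {n : ℕ}
    (G0 G1 : Fin n → F) (h0 : ∀ j, G0 j ≠ 0) (h1 : ∀ j, G1 j ≠ 0)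
    (u : Polynomial F) (hu : u ≠ 0) :
    2 * n ≤ ∑ j : Fin n,
      (u * (Polynomial.C (G0 j) + Polynomial.C (G1 j) * Polynomial.X)).support.card := by
  have hweight (j : Fin n) :
      2 ≤ (u * (C (G0 j) + C (G1 j) * X)).support.card := by
    refine two_le_card_support_mul hu (by simpa using h0 j) ?_
    rw [add_comm, natDegree_linear (h1 j)]
    exact one_pos
  calc 2 * n = ∑ _j : Fin n, 2 := by simp [mul_comm]
    _ ≤ _ := Finset.sum_le_sum fun j _ => hweight j

theorem stmt2 {F : Type*} [Field F] [Fintype F] {n : ℕ} (hn : 2 ≤ n)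
    (G0 G1 : Fin n → F) (h0 : ∀ j, G0 j ≠ 0) (h1 : ∀ j, G1 j ≠ 0)
    (u : Polynomial F) (hu : u ≠ 0) :
    2 * n ≤ ∑ j : Fin n,
      (u * (Polynomial.C (G0 j) + Polynomial.C (G1 j) * Polynomial.X)).support.card :=
  stmt2_general G0 G1 h0 h1 u hu
end

section
/- Let G_0, G_1, G_2 ∈ F_q^{1×n} be row vectors such that: (i) every full-size minor (i.e., every entry combination giving a nonzero-pattern determinant that is nonzero) of the 3n-column matrix [G_0 G_1 G_2] is nonzero (equivalently, all entries of G_0, G_1, G_2 are nonzero, since k = 1 means full-size minors are single entries), (ii) all non-trivially-zero 2×2 minors of the matrix [[G_0, G_1],[0, G_0]] are nonzero, and (iii) all non-trivially-zero 2×2 minors of [[G_2, G_1],[0, G_2]] are nonzero. Then for every nonzero u(z) ∈ F_q[z], wt(u(z)·(G_0 + G_1 z + G_2 z^2)) ≥ 3n − 1. -/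
/-!
Write `s` and `d` for the trailing and leading degree of `u`, and `g j = G0 j + G1 j z + G2 j z²`.
Since `G0 j` and `G2 j` are nonzero, every `u * g j` has nonzero coefficients at `s` and `d + 2`,
so has weight at least `2`. For `j ≠ k`, the combination `G0 k • u g j - G0 j • u g k` is
`u * (α z + β z²)` with `α = G1 j G0 k - G1 k G0 j` a nonzero `2 × 2` minor of `[[G0, G1], [0, G0]]`,
so its coefficient at `s + 1` is nonzero. Hence at most one `u * g j` has weight `2`, and the
total weight is at least `2 + 3 (n - 1)`.
-/

/-- A full-size minor (given by the column selection `f`) of `A` is trivially zero if,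
replacing nonzero entries by independent indeterminates, the determinant is the zero
polynomial; equivalently every permutation product contains a zero entry of `A`. -/
def IsTrivZero {F : Type*} [Zero F] {ι κ : Type*} [Fintype ι] [DecidableEq ι]
    (A : Matrix ι κ F) (f : ι ↪ κ) : Prop :=
  ∀ σ : Equiv.Perm ι, ∃ i, A i (f (σ i)) = 0

open Polynomial

namespace Polynomial

section Semiring

variable {R : Type*} [Semiring R] [NoZeroDivisors R] {u g : R[X]}

lemma natTrailingDegree_mem_support_mul (hu : u ≠ 0) (hg : g.coeff 0 ≠ 0) :
    u.natTrailingDegree ∈ (u * g).support := by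
  have hg' : g ≠ 0 := fun h => hg (by simp [h])
  have := natTrailingDegree_mem_support_of_nonzero (mul_ne_zero hu hg')
  rwa [natTrailingDegree_mul hu hg', natTrailingDegree_eq_zero.mpr (Or.inr hg), add_zero] at this

lemma natDegree_add_mem_support_mul (hu : u ≠ 0) (hg : g ≠ 0) :
    u.natDegree + g.natDegree ∈ (u * g).support := by
  rw [← natDegree_mul hu hg]
  exact natDegree_mem_support_of_nonzero (mul_ne_zero hu hg)

lemma two_le_card_support_mul_s4 (hu : u ≠ 0) (hg : g.coeff 0 ≠ 0) (hdeg : 1 ≤ g.natDegree) :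
    2 ≤ (u * g).support.card :=
  Finset.one_lt_card.mpr ⟨_, natTrailingDegree_mem_support_mul hu hg,
    _, natDegree_add_mem_support_mul hu (fun h => hg (by simp [h])),
    by have := u.natTrailingDegree_le_natDegree; omega⟩

lemma three_le_card_support_mul (hu : u ≠ 0) (hg : g.coeff 0 ≠ 0) (hdeg : 2 ≤ g.natDegree)
    (hnext : (u * g).coeff (u.natTrailingDegree + 1) ≠ 0) :
    3 ≤ (u * g).support.card :=
  Finset.two_lt_card.mpr ⟨_, natTrailingDegree_mem_support_mul hu hg,
    _, mem_support_iff.mpr hnext,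
    _, natDegree_add_mem_support_mul hu (fun h => hg (by simp [h])),
    by have := u.natTrailingDegree_le_natDegree; omega⟩

end Semiring

lemma coeff_mul_natTrailingDegree_add_one_ne_zero {R : Type*} [CommRing R] [NoZeroDivisors R]
    {u p q : R[X]} (hu : u ≠ 0) (hpq : p.coeff 0 * q.coeff 1 ≠ p.coeff 1 * q.coeff 0) :
    (u * p).coeff (u.natTrailingDegree + 1) ≠ 0 ∨ (u * q).coeff (u.natTrailingDegree + 1) ≠ 0 := by
  by_contra! hzero
  set r := C (p.coeff 0) * q - C (q.coeff 0) * p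
  have hr0 : r.coeff 0 = 0 := by simp [r, mul_comm]
  have hr1 : r.coeff 1 ≠ 0 := by
    simpa [r, sub_eq_zero, mul_comm (q.coeff 0)] using hpq
  have hr : r ≠ 0 := fun h => hr1 (by simp [h])
  have hrtrail : r.natTrailingDegree = 1 := by
    refine le_antisymm (natTrailingDegree_le_of_ne_zero hr1) (le_natTrailingDegree hr ?_)
    intro m hm
    rwa [Nat.lt_one_iff.mp hm]
  have hcoeff := coeff_mul_natTrailingDegree_add_natTrailingDegree (p := u) (q := r)
  rw [hrtrail, show u * r = C (p.coeff 0) * (u * q) - C (q.coeff 0) * (u * p) by ring,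
    coeff_sub, coeff_C_mul, coeff_C_mul, hzero.1, hzero.2, mul_zero, mul_zero, sub_zero] at hcoeff
  exact mul_ne_zero (trailingCoeff_nonzero_iff_nonzero.mpr hu)
    (by rwa [trailingCoeff, hrtrail]) hcoeff.symm

end Polynomial

lemma three_mul_card_sub_one_le_sum {ι : Type*} [Fintype ι] {w : ι → ℕ} (hw : ∀ j, 2 ≤ w j)
    (hpair : ∀ j k, j ≠ k → 3 ≤ w j ∨ 3 ≤ w k) :
    3 * Fintype.card ι - 1 ≤ ∑ j, w j := by
  classical
  by_cases hall : ∀ j, 3 ≤ w j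
  · have := Finset.card_nsmul_le_sum Finset.univ w 3 fun j _ => hall j
    rw [smul_eq_mul, Finset.card_univ] at this
    exact le_trans (Nat.sub_le _ _) (by rwa [mul_comm])
  · push Not at hall
    obtain ⟨j₀, hj₀⟩ := hall
    have hrest : (Finset.univ.erase j₀).card • 3 ≤ ∑ j ∈ Finset.univ.erase j₀, w j :=
      Finset.card_nsmul_le_sum _ w 3 fun j hj =>
        (hpair j j₀ (Finset.ne_of_mem_erase hj)).resolve_right (by omega)
    rw [smul_eq_mul, Finset.card_erase_of_mem (Finset.mem_univ j₀), Finset.card_univ] at hrest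
    have hsplit : w j₀ + ∑ j ∈ Finset.univ.erase j₀, w j = ∑ j, w j :=
      Finset.add_sum_erase _ w (Finset.mem_univ j₀)
    have := hw j₀
    omega

/-- The matrix `[[A, B], [0, A]]`, with columns indexed by `(block, position)`. -/
def slidingMatrix {F : Type*} [Zero F] {n : ℕ} (A B : Fin n → F) :
    Matrix (Fin 2) (Fin 2 × Fin n) F :=
  Matrix.of fun i p => if i = 0 then (if p.1 = 0 then A p.2 else B p.2)
    else (if p.1 = 0 then 0 else A p.2)

/-- The minor on the columns `(1, j), (1, k)` of `[[A, B], [0, A]]`. -/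
lemma mul_ne_mul_of_slidingMatrix_minors_ne_zero {F : Type*} [Field F] {n : ℕ} {A B : Fin n → F}
    (hA : ∀ j, A j ≠ 0) (hB : ∀ j, B j ≠ 0)
    (hM : ∀ f : Fin 2 ↪ Fin 2 × Fin n,
      ¬ IsTrivZero (slidingMatrix A B) f → ((slidingMatrix A B).submatrix id f).det ≠ 0)
    {j k : Fin n} (hjk : j ≠ k) :
    A j * B k ≠ B j * A k := by
  let f : Fin 2 ↪ Fin 2 × Fin n :=
    ⟨![(1, j), (1, k)], fun a b hab => by fin_cases a <;> fin_cases b <;> simp_all⟩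
  have hf0 : f 0 = (1, j) := rfl
  have hf1 : f 1 = (1, k) := rfl
  have hnontriv : ¬ IsTrivZero (slidingMatrix A B) f := fun h => by
    obtain ⟨i, hi⟩ := h (Equiv.refl _)
    fin_cases i
    · exact hB j (by simpa [slidingMatrix, hf0] using hi)
    · exact hA k (by simpa [slidingMatrix, hf1] using hi)
  have hdet := hM f hnontriv
  rw [Matrix.det_fin_two] at hdet
  simp only [slidingMatrix, Matrix.submatrix_apply, id_eq, hf0, hf1, Matrix.of_apply,
    if_pos, one_ne_zero, if_false, ne_eq] at hdet
  intro h
  exact hdet (by linear_combination -h)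

theorem stmt4_general {F : Type*} [Field F] {n : ℕ}
    (G0 G1 G2 : Fin n → F)
    (h0 : ∀ j, G0 j ≠ 0) (h1 : ∀ j, G1 j ≠ 0) (h2 : ∀ j, G2 j ≠ 0)
    (hM1 : ∀ f : Fin 2 ↪ Fin 2 × Fin n,
      ¬ IsTrivZero (Matrix.of fun (i : Fin 2) (p : Fin 2 × Fin n) =>
          if i = 0 then (if p.1 = 0 then G0 p.2 else G1 p.2)
          else (if p.1 = 0 then 0 else G0 p.2)) f →
      ((Matrix.of fun (i : Fin 2) (p : Fin 2 × Fin n) =>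
          if i = 0 then (if p.1 = 0 then G0 p.2 else G1 p.2)
          else (if p.1 = 0 then 0 else G0 p.2)).submatrix id f).det ≠ 0)
    (u : Polynomial F) (hu : u ≠ 0) :
    3 * n - 1 ≤ ∑ j : Fin n,
      (u * (Polynomial.C (G0 j) + Polynomial.C (G1 j) * Polynomial.X
        + Polynomial.C (G2 j) * Polynomial.X ^ 2)).support.card := by
  set g : Fin n → F[X] := fun j => C (G0 j) + C (G1 j) * X + C (G2 j) * X ^ 2
  have hcoeff0 (j) : (g j).coeff 0 = G0 j := by simp [g]
  have hcoeff1 (j) : (g j).coeff 1 = G1 j := by simp [g]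
  have hdeg (j) : (g j).natDegree = 2 := by
    rw [show g j = C (G2 j) * X ^ 2 + C (G1 j) * X + C (G0 j) by simp only [g]; ring]
    exact natDegree_quadratic (h2 j)
  simpa using three_mul_card_sub_one_le_sum (w := fun j => (u * g j).support.card)
    (fun j => two_le_card_support_mul_s4 hu (by rw [hcoeff0]; exact h0 j) (by rw [hdeg]; omega))
    fun j k hjk => by
      have hcross : (g j).coeff 0 * (g k).coeff 1 ≠ (g j).coeff 1 * (g k).coeff 0 := by
        simpa only [hcoeff0, hcoeff1] using mul_ne_mul_of_slidingMatrix_minors_ne_zero h0 h1 hM1 hjk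
      refine (coeff_mul_natTrailingDegree_add_one_ne_zero hu hcross).imp ?_ ?_ <;>
        exact three_le_card_support_mul hu (by rw [hcoeff0]; exact h0 _) (by rw [hdeg])

theorem stmt4 {F : Type*} [Field F] [Fintype F] {n : ℕ} (hn : 1 ≤ n)
    (G0 G1 G2 : Fin n → F)
    (h0 : ∀ j, G0 j ≠ 0) (h1 : ∀ j, G1 j ≠ 0) (h2 : ∀ j, G2 j ≠ 0)
    (hM1 : ∀ f : Fin 2 ↪ Fin 2 × Fin n,
      ¬ IsTrivZero (Matrix.of fun (i : Fin 2) (p : Fin 2 × Fin n) =>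
          if i = 0 then (if p.1 = 0 then G0 p.2 else G1 p.2)
          else (if p.1 = 0 then 0 else G0 p.2)) f →
      ((Matrix.of fun (i : Fin 2) (p : Fin 2 × Fin n) =>
          if i = 0 then (if p.1 = 0 then G0 p.2 else G1 p.2)
          else (if p.1 = 0 then 0 else G0 p.2)).submatrix id f).det ≠ 0)
    (hM2 : ∀ f : Fin 2 ↪ Fin 2 × Fin n,
      ¬ IsTrivZero (Matrix.of fun (i : Fin 2) (p : Fin 2 × Fin n) =>
          if i = 0 then (if p.1 = 0 then G2 p.2 else G1 p.2)
          else (if p.1 = 0 then 0 else G2 p.2)) f →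
      ((Matrix.of fun (i : Fin 2) (p : Fin 2 × Fin n) =>
          if i = 0 then (if p.1 = 0 then G2 p.2 else G1 p.2)
          else (if p.1 = 0 then 0 else G2 p.2)).submatrix id f).det ≠ 0)
    (u : Polynomial F) (hu : u ≠ 0) :
    3 * n - 1 ≤ ∑ j : Fin n,
      (u * (Polynomial.C (G0 j) + Polynomial.C (G1 j) * Polynomial.X
        + Polynomial.C (G2 j) * Polynomial.X ^ 2)).support.card :=
  stmt4_general G0 G1 G2 h0 h1 h2 hM1 u hu
end

section
/- Column distance monotonicity bound: if for some j ≥ 1 every non-trivially-zero full-size minor of the truncated sliding generator matrix G_j^c = [[G_0, ..., G_j],[⋱, ⋮],[0, G_0]] (size (j+1)k × (j+1)n, with G_0 ∈ F_q^{k×n} of full row rank) is nonzero, then every non-trivially-zero full-size minor of G_i^c is nonzero for all 0 ≤ i ≤ j. -/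
/-- The truncated sliding generator matrix `G_i^c`, block upper-triangular Toeplitz with
block `(r, c)` equal to `G_{c-r}` for `r ≤ c`. -/
def Gc {F : Type*} [Field F] {k n : ℕ} (G : ℕ → Matrix (Fin k) (Fin n) F) (i : ℕ) :
    Matrix (Fin (i + 1) × Fin k) (Fin (i + 1) × Fin n) F :=
  fun p q => if (p.1 : ℕ) ≤ (q.1 : ℕ) then G ((q.1 : ℕ) - (p.1 : ℕ)) p.2 q.2 else 0

open Matrix in
/-- From full row rank, an injective column selection hitting nonzero entries on the diagonal. -/
lemma exists_good_cols {F : Type*} [Field F] {k n : ℕ} (G0 : Matrix (Fin k) (Fin n) F)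
    (h : G0.rank = k) : ∃ t : Fin k → Fin n, Function.Injective t ∧ ∀ p, G0 p (t p) ≠ 0 := by
  classical
  have hspan : Submodule.span F (Set.range G0ᵀ) = ⊤ := by
    apply Submodule.eq_top_of_finrank_eq
    rw [show Set.range G0ᵀ = Set.range G0.col from rfl, ← Matrix.rank_eq_finrank_span_cols, h, Module.finrank_fintype_fun_eq_card,
      Fintype.card_fin]
  obtain ⟨b, hb_sub, hb_span, hb_ind⟩ := exists_linearIndependent F (Set.range G0ᵀ)
  rw [hspan] at hb_span
  have hfin : b.Finite := hb_ind.setFinite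
  haveI : Fintype b := hfin.fintype
  have hcard : Fintype.card b = k := by
    have := finrank_span_set_eq_card hb_ind
    rw [hb_span] at this
    rw [← Set.toFinset_card, ← this, finrank_top, Module.finrank_fintype_fun_eq_card,
      Fintype.card_fin]
  have e : Fin k ≃ b := (Fintype.equivFinOfCardEq hcard).symm
  have hc : ∀ x : b, ∃ jx : Fin n, G0ᵀ jx = (x : Fin k → F) := fun x => hb_sub x.2
  choose c hcc using hc
  have hcinj : Function.Injective c := by
    intro x y hxy
    apply Subtype.ext
    rw [← hcc x, ← hcc y, hxy]
  set s : Fin k → Fin n := c ∘ e with hs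
  have hsinj : Function.Injective s := hcinj.comp e.injective
  set B : Matrix (Fin k) (Fin k) F := G0.submatrix id s with hB
  have hBcols : (fun p => Bᵀ p) = (fun x : b => (x : Fin k → F)) ∘ e := by
    funext p
    funext r
    have := congrFun (hcc (e p)) r
    simpa [hB, Matrix.transpose_apply, Matrix.submatrix_apply, hs] using this
  have hBind : LinearIndependent F (fun p => Bᵀ p) := by
    rw [hBcols]
    exact hb_ind.comp e e.injective
  have hBunit : IsUnit B := Matrix.linearIndependent_cols_iff_isUnit.mp hBind
  have hBdet : B.det ≠ 0 := by
    have := (Matrix.isUnit_iff_isUnit_det B).mp hBunit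
    exact this.ne_zero
  by_contra hcon
  push_neg at hcon
  apply hBdet
  rw [Matrix.det_apply']
  apply Finset.sum_eq_zero
  intro σ _
  obtain ⟨p, hp0⟩ := hcon (s ∘ ⇑σ⁻¹) (hsinj.comp σ⁻¹.injective)
  apply mul_eq_zero_of_right
  apply Finset.prod_eq_zero (Finset.mem_univ (σ⁻¹ p))
  simpa [hB] using hp0

theorem stmt18 {F : Type*} [Field F] [Fintype F] [DecidableEq F] {k n : ℕ} (hkn : k ≤ n)
    (G : ℕ → Matrix (Fin k) (Fin n) F) (hG0 : (G 0).rank = k) (j : ℕ) (hj : 1 ≤ j)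
    (h : ∀ f : (Fin (j + 1) × Fin k) ↪ (Fin (j + 1) × Fin n),
      ¬ IsTrivZero (Gc G j) f → ((Gc G j).submatrix id f).det ≠ 0) :
    ∀ i ≤ j, ∀ f : (Fin (i + 1) × Fin k) ↪ (Fin (i + 1) × Fin n),
      ¬ IsTrivZero (Gc G i) f → ((Gc G i).submatrix id f).det ≠ 0 := by
  classical
  intro i hij f hf
  obtain ⟨t, htinj, htnz⟩ := exists_good_cols (G 0) hG0
  -- the extended column selection
  set f' : Fin (j + 1) × Fin k → Fin (j + 1) × Fin n := fun q =>
    if hq : (q.1 : ℕ) ≤ i then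
      (⟨((f (⟨q.1, by omega⟩, q.2)).1 : ℕ), by
          have := (f (⟨q.1, by omega⟩, q.2)).1.isLt; omega⟩, (f (⟨q.1, by omega⟩, q.2)).2)
    else (q.1, t q.2) with hf'def
  have hf'fst_le : ∀ q, (q.1 : ℕ) ≤ i → ((f' q).1 : ℕ) ≤ i := by
    intro q hq
    simp only [hf'def, dif_pos hq]
    have := (f (⟨q.1, by omega⟩, q.2)).1.isLt
    omega
  have hf'inj : Function.Injective f' := by
    intro a b hab
    by_cases ha : (a.1 : ℕ) ≤ i <;> by_cases hb : (b.1 : ℕ) ≤ i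
    · simp only [hf'def, dif_pos ha, dif_pos hb, Prod.mk.injEq, Fin.mk.injEq] at hab
      have h1 : f (⟨a.1, by omega⟩, a.2) = f (⟨b.1, by omega⟩, b.2) := by
        apply Prod.ext
        · exact Fin.ext hab.1
        · exact hab.2
      have h2 := f.injective h1
      simp only [Prod.mk.injEq, Fin.mk.injEq] at h2
      exact Prod.ext (Fin.ext h2.1) h2.2
    · exfalso
      have h1 := hf'fst_le a ha
      rw [hab] at h1
      simp only [hf'def, dif_neg hb] at h1
      omega
    · exfalso
      have h1 := hf'fst_le b hb
      rw [← hab] at h1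
      simp only [hf'def, dif_neg ha] at h1
      omega
    · simp only [hf'def, dif_neg ha, dif_neg hb, Prod.mk.injEq] at hab
      exact Prod.ext hab.1 (htinj hab.2)
  set femb : (Fin (j + 1) × Fin k) ↪ (Fin (j + 1) × Fin n) := ⟨f', hf'inj⟩ with hfemb
  -- f' is not trivially zero
  rw [IsTrivZero] at hf
  push_neg at hf
  obtain ⟨σ, hσ⟩ := hf
  set e' : (Fin (i + 1) × Fin k) ≃ {q : Fin (j + 1) × Fin k // (q.1 : ℕ) ≤ i} :=
    { toFun := fun a => ⟨(⟨(a.1 : ℕ), by omega⟩, a.2), by simp; omega⟩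
      invFun := fun q => (⟨(q.1.1 : ℕ), by omega⟩, q.1.2)
      left_inv := fun a => by ext <;> simp
      right_inv := fun q => by ext <;> simp } with he'
  set σ' : Equiv.Perm (Fin (j + 1) × Fin k) := σ.extendDomain e' with hσ'
  have hnt : ¬ IsTrivZero (Gc G j) femb := by
    rw [IsTrivZero]
    push_neg
    refine ⟨σ', fun r => ?_⟩
    by_cases hr : (r.1 : ℕ) ≤ i
    · have hσr : σ' r = ((e' (σ (e'.symm ⟨r, hr⟩)) : {q : Fin (j + 1) × Fin k // (q.1 : ℕ) ≤ i}) :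
          Fin (j + 1) × Fin k) :=
        Equiv.Perm.extendDomain_apply_subtype σ e' hr
      set a : Fin (i + 1) × Fin k := e'.symm ⟨r, hr⟩ with ha
      have har1 : (a.1 : ℕ) = (r.1 : ℕ) := by simp [ha, he']
      have har2 : a.2 = r.2 := by simp [ha, he']
      have hcol : (σ' r).1 = (⟨((σ a).1 : ℕ), by omega⟩ : Fin (j + 1)) ∧ (σ' r).2 = (σ a).2 := by
        rw [hσr]; constructor <;> simp [he']
      have hle : ((σ' r).1 : ℕ) ≤ i := by rw [hcol.1]; exact Nat.lt_succ_iff.mp (σ a).1.isLt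
      have key : Gc G j r (f' (σ' r)) = Gc G i a (f (σ a)) := by
        simp only [hf'def, dif_pos hle, Gc]
        have h1val : ((σ' r).1 : ℕ) = ((σ a).1 : ℕ) := by rw [hcol.1]
        have h1 : (⟨((σ' r).1 : ℕ), by omega⟩ : Fin (i + 1)) = (σ a).1 := by
          apply Fin.ext; simpa using h1val
        have h2 : ((⟨((σ' r).1 : ℕ), by omega⟩ : Fin (i + 1)), (σ' r).2) = σ a := by
          apply Prod.ext
          · exact h1
          · exact hcol.2
        rw [h2, har1, har2]
      simp only [hfemb, Function.Embedding.coeFn_mk]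
      rw [key]
      exact hσ a
    · have hσr : σ' r = r := Equiv.Perm.extendDomain_apply_not_subtype σ e' hr
      rw [hσr]
      simp only [hfemb, Function.Embedding.coeFn_mk, hf'def, dif_neg hr, Gc, le_refl, if_true, Nat.sub_self]
      exact htnz r.2
  have hdetM := h femb hnt
  -- suppose the small determinant vanishes
  by_contra h0

  obtain ⟨v, hv0, hvmul⟩ := (Matrix.exists_mulVec_eq_zero_iff).mpr h0
  set V : Fin (j + 1) × Fin k → F := fun q =>
    if hq : (q.1 : ℕ) ≤ i then v (⟨(q.1 : ℕ), by omega⟩, q.2) else 0 with hV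
  have hV0 : V ≠ 0 := by
    obtain ⟨p, hp⟩ := Function.ne_iff.mp hv0
    intro hc
    apply hp
    have := congrFun hc ((⟨(p.1 : ℕ), by omega⟩ : Fin (j + 1)), p.2)
    simp only [hV, Pi.zero_apply] at this
    rw [dif_pos (by simp; omega : ((⟨(p.1 : ℕ), by omega⟩ : Fin (j + 1)) : ℕ) ≤ i)] at this
    simpa using this
  have hMV : ((Gc G j).submatrix id femb).mulVec V = 0 := by
    funext r
    rw [Matrix.mulVec, Pi.zero_apply]
    set emb : (Fin (i + 1) × Fin k) ↪ (Fin (j + 1) × Fin k) :=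
      ⟨fun a => ((⟨(a.1 : ℕ), by omega⟩ : Fin (j + 1)), a.2), by
        intro a b hab
        simp only [Prod.mk.injEq, Fin.mk.injEq] at hab
        exact Prod.ext (Fin.ext hab.1) hab.2⟩ with hemb
    have hsum : ∑ q, (Gc G j).submatrix id femb r q * V q =
        ∑ a, (Gc G j).submatrix id femb r (emb a) * V (emb a) := by
      rw [← Finset.sum_map Finset.univ emb
        (fun q => (Gc G j).submatrix id femb r q * V q)]
      symm
      apply Finset.sum_subset (Finset.subset_univ _)
      intro q _ hq
      have hq' : ¬ (q.1 : ℕ) ≤ i := by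
        intro hle
        apply hq
        rw [Finset.mem_map]
        exact ⟨((⟨(q.1 : ℕ), by omega⟩ : Fin (i + 1)), q.2), Finset.mem_univ _, by
          rw [hemb]; rfl⟩
      rw [hV]
      simp [dif_neg hq']
    rw [dotProduct, hsum]
    have hVemb : ∀ a : Fin (i + 1) × Fin k, V (emb a) = v a := by
      intro a
      have hle : ((emb a).1 : ℕ) ≤ i := by show (a.1 : ℕ) ≤ i; omega
      simp only [hV, dif_pos hle]
      have ha2 : ((⟨((emb a).1 : ℕ), by omega⟩ : Fin (i + 1)), (emb a).2) = a := by
        apply Prod.ext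
        · apply Fin.ext; rfl
        · rfl
      rw [ha2]
    have hf'emb : ∀ a : Fin (i + 1) × Fin k, f' (emb a) =
        ((⟨((f a).1 : ℕ), by have := (f a).1.isLt; omega⟩ : Fin (j + 1)), (f a).2) := by
      intro a
      have hle : ((emb a).1 : ℕ) ≤ i := by show (a.1 : ℕ) ≤ i; omega
      simp only [hf'def, dif_pos hle]
      have ha2 : ((⟨((emb a).1 : ℕ), by omega⟩ : Fin (i + 1)), (emb a).2) = a := by
        apply Prod.ext
        · apply Fin.ext; rfl
        · rfl
      rfl
    by_cases hr : (r.1 : ℕ) ≤ i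
    · have hterm : ∀ a : Fin (i + 1) × Fin k,
          (Gc G j).submatrix id femb r (emb a) * V (emb a) =
          (Gc G i).submatrix id f ((⟨(r.1 : ℕ), by omega⟩ : Fin (i + 1)), r.2) a * v a := by
        intro a
        simp only [hfemb, Matrix.submatrix_apply, id_eq, Function.Embedding.coeFn_mk]
        rw [hVemb, hf'emb]
        congr 1
      rw [Finset.sum_congr rfl (fun a _ => hterm a)]
      have hrow := congrFun hvmul ((⟨(r.1 : ℕ), by omega⟩ : Fin (i + 1)), r.2)
      rw [Matrix.mulVec, dotProduct, Pi.zero_apply] at hrow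
      exact hrow
    · apply Finset.sum_eq_zero
      intro a _
      simp only [hfemb, Matrix.submatrix_apply, id_eq, Function.Embedding.coeFn_mk]
      rw [hf'emb]
      have hz : Gc G j r ((⟨((f a).1 : ℕ), by have := (f a).1.isLt; omega⟩ : Fin (j + 1)),
          (f a).2) = 0 := by
        simp only [Gc]
        rw [if_neg (by have := (f a).1.isLt; simp; omega)]
      rw [hz, zero_mul]
  exact hdetM ((Matrix.exists_mulVec_eq_zero_iff).mp ⟨V, hV0, hMV⟩)
end
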